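/- Let w = (π, λ) be an element of the extended affine Weyl group of GL(d) with Σ_j λ_j = r, acting K-linearly on K^d by w(e_j) = t^{λ_j} e_{π(j)}. Then the standard lattice chain satisfies Λ_i ⊇ w(Λ_i) ⊇ tΛ_i for every i ∈ {0, …, d−1} if and only if w is μ-permissible for the minuscule coweight μ = (1,…,1,0,…,0) with r entries equal to 1. -/

import Mathlib

noncomputable section

variable (k : Type*) [Field k] (d : ℕ)

/-- The element `t` of `K = k((t))`, as a Laurent series. -/
def tK : LaurentSeries k := HahnSeries.single 1 1

/-- The monomial `t^m` of `K = k((t))`, for `m : ℤ`. -/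
def tpow (m : ℤ) : LaurentSeries k := HahnSeries.single m 1

/-- The standard basis vector `e_j` of `K^d` (0-indexed: `e_j` here is `e_{j+1}` of the paper). -/
def stdVec (j : Fin d) : Fin d → LaurentSeries k := Pi.single j 1

/-- The standard lattice `Λ_i ⊆ K^d`: the `O = k[[t]]`-submodule generated by
`t e_1, …, t e_i, e_{i+1}, …, e_d` (0-indexed). -/
def Lam (i : ℕ) : Submodule (PowerSeries k) (Fin d → LaurentSeries k) :=
  Submodule.span _ (Set.range fun j : Fin d =>
    if (j : ℕ) < i then tK k • stdVec k d j else stdVec k d j)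

/-- Multiplication by `t` on `K^d`, as an `O`-linear endomorphism. -/
def tMul : (Fin d → LaurentSeries k) →ₗ[PowerSeries k] (Fin d → LaurentSeries k) :=
  (LinearMap.lsmul (LaurentSeries k) (Fin d → LaurentSeries k) (tK k)).restrictScalars
    (PowerSeries k)

/-- The lattice `tΛ_i`. -/
def tLam (i : ℕ) : Submodule (PowerSeries k) (Fin d → LaurentSeries k) :=
  (Lam k d i).map (tMul k d)

/-- The `K`-linear action of `w = (π, λ)` on `K^d`, determined by
`w(e_j) = t^{λ_j} e_{π(j)}`. -/
def wMap (π : Equiv.Perm (Fin d)) (lam : Fin d → ℤ) :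
    (Fin d → LaurentSeries k) →ₗ[LaurentSeries k] (Fin d → LaurentSeries k) :=
  (Pi.basisFun (LaurentSeries k) (Fin d)).constr (LaurentSeries k)
    fun j => tpow k (lam j) • stdVec k d (π j)

/-- The lattice `w(Λ_i)`. -/
def wLam (π : Equiv.Perm (Fin d)) (lam : Fin d → ℤ) (i : ℕ) :
    Submodule (PowerSeries k) (Fin d → LaurentSeries k) :=
  (Lam k d i).map ((wMap k d π lam).restrictScalars (PowerSeries k))

/-- The affine action of `w = (π, λ)` on `ℤ^d ⊆ ℝ^d`: `w·x = π(x + λ)`,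
i.e. `(w·x)_b = x_{π⁻¹(b)} + λ_{π⁻¹(b)}`. -/
def wAff (π : Equiv.Perm (Fin d)) (lam : Fin d → ℤ) (x : Fin d → ℤ) : Fin d → ℤ :=
  fun b => x (π.symm b) + lam (π.symm b)

/-- The vertex `a_i = (1,…,1,0,…,0)` (with `i` ones) of the base alcove. -/
def vertex (i : ℕ) : Fin d → ℤ := fun b => if (b : ℕ) < i then 1 else 0

/-- The minuscule coweight `μ = (1,…,1,0,…,0)` with `r` ones. -/
def mu (r : ℕ) : Fin d → ℤ := fun b => if (b : ℕ) < r then 1 else 0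

/-- `w = (π, λ)` is `μ`-permissible for `μ = (1,…,1,0,…,0)` with `r` ones: for every
vertex `a_i` (`0 ≤ i ≤ d-1`) of the base alcove, `w·a_i - a_i` is a rearrangement of `μ`. -/
def MuPermissible (π : Equiv.Perm (Fin d)) (lam : Fin d → ℤ) (r : ℕ) : Prop :=
  ∀ i : Fin d, ∃ σ : Equiv.Perm (Fin d),
    (fun b => wAff d π lam (vertex d (i : ℕ)) b - vertex d (i : ℕ) b) = mu d r ∘ σ


-- ### Auxiliary lemmas ###

lemma tpow_mul_tpow (a b : ℤ) : tpow k a * tpow k b = tpow k (a + b) := by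
  simp [tpow, HahnSeries.single_mul_single]

lemma tpow_zero' : tpow k 0 = 1 := by simp [tpow]

lemma coe_X_pow (a : ℕ) : ((PowerSeries.X ^ a : PowerSeries k) : LaurentSeries k) = tpow k a := by
  push_cast [PowerSeries.coe_X]
  rw [HahnSeries.single_pow]
  simp [tpow]

lemma Xpow_smul (a : ℕ) (v : Fin d → LaurentSeries k) :
    (PowerSeries.X ^ a : PowerSeries k) • v = tpow k (a : ℤ) • v := by
  rw [← algebraMap_smul (LaurentSeries k) (PowerSeries.X ^ a : PowerSeries k) v,
    LaurentSeries.coe_algebraMap,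
    show (HahnSeries.ofPowerSeries ℤ k) (PowerSeries.X ^ a) = tpow k a from coe_X_pow k a]

lemma tpow_smul_tpow_smul (a b : ℤ) (v : Fin d → LaurentSeries k) :
    tpow k a • tpow k b • v = tpow k (a + b) • v := by
  funext b'
  simp only [Pi.smul_apply, smul_eq_mul, ← mul_assoc, tpow_mul_tpow]

/-- The diagonal lattice spanned by `t^{n b} e_b`. -/
def L (n : Fin d → ℤ) : Submodule (PowerSeries k) (Fin d → LaurentSeries k) :=
  Submodule.span _ (Set.range fun b : Fin d => tpow k (n b) • stdVec k d b)

lemma L_le_L {m n : Fin d → ℤ} (h : ∀ b, n b ≤ m b) : L k d m ≤ L k d n := by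
  rw [L, Submodule.span_le]
  rintro - ⟨b, rfl⟩
  dsimp only
  have hb := h b
  have : tpow k (m b) • stdVec k d b
      = (PowerSeries.X ^ (m b - n b).toNat : PowerSeries k) • (tpow k (n b) • stdVec k d b) := by
    rw [Xpow_smul, tpow_smul_tpow_smul, Int.toNat_of_nonneg (by omega)]
    congr 2; omega
  rw [this]
  exact Submodule.smul_mem _ _ (Submodule.subset_span ⟨b, rfl⟩)

lemma mem_L_coord {n : Fin d → ℤ} {x : Fin d → LaurentSeries k} (hx : x ∈ L k d n) (b : Fin d) :
    x b ∈ Submodule.span (PowerSeries k) {tpow k (n b)} := by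
  have hle : L k d n ≤ Submodule.pi Set.univ
      (fun b : Fin d => Submodule.span (PowerSeries k) {tpow k (n b)}) := by
    rw [L, Submodule.span_le]
    rintro - ⟨c, rfl⟩ b' -
    dsimp only
    rw [Pi.smul_apply]
    rcases eq_or_ne b' c with rfl | hne
    · rw [stdVec, Pi.single_eq_same, smul_eq_mul, mul_one]
      exact Submodule.mem_span_singleton_self _
    · rw [stdVec, Pi.single_eq_of_ne hne, smul_zero]
      exact Submodule.zero_mem _
  exact hle hx b (Set.mem_univ b)

lemma le_of_L_le_L {m n : Fin d → ℤ} (h : L k d m ≤ L k d n) (b : Fin d) : n b ≤ m b := by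
  have hmem : tpow k (m b) • stdVec k d b ∈ L k d m := Submodule.subset_span ⟨b, rfl⟩
  have hmem2 := mem_L_coord k d (h hmem) b
  have hco : (tpow k (m b) • stdVec k d b) b = tpow k (m b) := by
    rw [Pi.smul_apply, stdVec, Pi.single_eq_same, smul_eq_mul, mul_one]
  rw [hco, Submodule.mem_span_singleton] at hmem2
  obtain ⟨c, hc⟩ := hmem2
  by_contra hlt
  push_neg at hlt
  have hc' : ((c : LaurentSeries k)) * tpow k (n b) = tpow k (m b) := by
    rw [← hc, Algebra.smul_def, LaurentSeries.coe_algebraMap]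
  have h1 : (((c : LaurentSeries k)) * tpow k (n b)).coeff (m b) = 0 := by
    have heq : m b = (m b - n b) + n b := by omega
    rw [heq, tpow, HahnSeries.coeff_mul_single_add, mul_one, PowerSeries.coeff_coe,
      if_pos (by omega)]
  rw [hc', tpow, HahnSeries.coeff_single_same] at h1
  exact one_ne_zero h1

lemma L_le_L_iff (m n : Fin d → ℤ) : L k d m ≤ L k d n ↔ ∀ b, n b ≤ m b :=
  ⟨le_of_L_le_L k d, L_le_L k d⟩

lemma Lam_eq (i : ℕ) : Lam k d i = L k d (vertex d i) := by
  unfold Lam L vertex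
  congr 1
  apply congrArg
  funext j
  split_ifs with h
  · rfl
  · rw [tpow_zero', one_smul]

lemma tLam_eq (i : ℕ) : tLam k d i = L k d (fun b => vertex d i b + 1) := by
  rw [tLam, Lam_eq, L, Submodule.map_span, L, ← Set.range_comp]
  congr 1
  apply congrArg
  funext b
  show tK k • (tpow k (vertex d i b) • stdVec k d b) = _
  rw [show tK k = tpow k 1 from rfl, tpow_smul_tpow_smul, add_comm]

lemma wLam_eq (π : Equiv.Perm (Fin d)) (lam : Fin d → ℤ) (i : ℕ) :
    wLam k d π lam i = L k d (fun b => vertex d i (π.symm b) + lam (π.symm b)) := by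
  classical
  rw [wLam, Lam_eq, L, Submodule.map_span, L, ← Set.range_comp]
  congr 1
  have hcomp : ((wMap k d π lam).restrictScalars (PowerSeries k) ∘
      fun b : Fin d => tpow k (vertex d i b) • stdVec k d b)
      = (fun b : Fin d => tpow k (vertex d i (π.symm b) + lam (π.symm b)) • stdVec k d b) ∘ π := by
    funext j
    show wMap k d π lam (tpow k (vertex d i j) • stdVec k d j) = _
    rw [map_smul]
    have hb : stdVec k d j = Pi.basisFun (LaurentSeries k) (Fin d) j := by
      rw [Pi.basisFun_apply]; rfl
    rw [wMap, hb, Module.Basis.constr_basis, tpow_smul_tpow_smul]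
    simp only [Function.comp_apply, Equiv.symm_apply_apply]
  rw [hcomp, Set.range_comp, Equiv.range_eq_univ, Set.image_univ]

lemma mu_zero_or_one (r : ℕ) (b : Fin d) : mu d r b = 0 ∨ mu d r b = 1 := by
  rw [mu]; split <;> simp

lemma card_filter_mu (r : ℕ) (hrd : r ≤ d) :
    (Finset.univ.filter (fun b : Fin d => mu d r b = 1)).card = r := by
  classical
  have hfe : Finset.univ.filter (fun b : Fin d => mu d r b = 1)
      = Finset.univ.filter (fun b : Fin d => (b : ℕ) < r) := by
    apply Finset.filter_congr
    intro b _
    rw [mu]; split <;> simp_all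
  rw [hfe]
  have hsb : (Finset.univ.filter (fun b : Fin d => (b : ℕ) < r)).card
      = ∑ b : Fin d, if (b : ℕ) < r then 1 else 0 := by
    rw [Finset.sum_boole]; simp
  rw [hsb, Fin.sum_univ_eq_sum_range (fun n => if n < r then 1 else 0),
    ← Finset.sum_filter]
  have hfil : (Finset.range d).filter (fun n => n < r) = Finset.range r := by
    ext n; simp only [Finset.mem_filter, Finset.mem_range]; omega
  rw [hfil]
  simp

lemma rearrange_iff (r : ℕ) (D : Fin d → ℤ) (hsum : ∑ b, D b = (r : ℤ)) :
    (∀ b, 0 ≤ D b ∧ D b ≤ 1) ↔ ∃ σ : Equiv.Perm (Fin d), D = mu d r ∘ σ := by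
  classical
  constructor
  · intro h
    have hD : ∀ b, D b = 0 ∨ D b = 1 := fun b => by have := h b; omega
    have hcard : (Finset.univ.filter (fun b : Fin d => D b = 1)).card = r := by
      have h1 : ∑ b, D b = ∑ b : Fin d, (if D b = 1 then (1:ℤ) else 0) := by
        apply Finset.sum_congr rfl
        intro b _
        rcases hD b with h' | h' <;> simp [h']
      rw [h1, Finset.sum_boole] at hsum
      exact_mod_cast hsum
    have hrd : r ≤ d := by
      rw [← hcard]
      simpa using Finset.card_le_univ (Finset.univ.filter (fun b : Fin d => D b = 1))
    have hT := card_filter_mu d r hrd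
    have e1 : {b : Fin d // D b = 1} ≃ {b : Fin d // mu d r b = 1} := by
      apply Fintype.equivOfCardEq
      rw [Fintype.card_subtype, Fintype.card_subtype, hcard, hT]
    have e0 : {b : Fin d // ¬ D b = 1} ≃ {b : Fin d // ¬ mu d r b = 1} := by
      apply Fintype.equivOfCardEq
      rw [Fintype.card_subtype_compl, Fintype.card_subtype_compl,
        Fintype.card_subtype, Fintype.card_subtype, hcard, hT]
    refine ⟨(Equiv.sumCompl (fun b => D b = 1)).symm.trans
      ((e1.sumCongr e0).trans (Equiv.sumCompl (fun b => mu d r b = 1))), funext fun b => ?_⟩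
    simp only [Function.comp_apply, Equiv.trans_apply]
    rcases hD b with h0 | h1
    · rw [Equiv.sumCompl_symm_apply_of_neg (p := fun b => D b = 1) (a := b) (by omega)]
      simp only [Equiv.sumCongr_apply, Sum.map_inr, Equiv.sumCompl_apply_inr]
      have hne := (e0 ⟨b, by omega⟩).2
      rcases mu_zero_or_one d r (e0 ⟨b, by omega⟩ : Fin d) with hm | hm
      · omega
      · exact absurd hm hne
    · rw [Equiv.sumCompl_symm_apply_of_pos (p := fun b => D b = 1) (a := b) h1]
      simp only [Equiv.sumCongr_apply, Sum.map_inl, Equiv.sumCompl_apply_inl]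
      rw [h1, (e1 ⟨b, h1⟩).2]
  · rintro ⟨σ, hσ⟩ b
    rw [hσ]
    rcases mu_zero_or_one d r (σ b) with h | h <;>
      simp [Function.comp_apply, h]

/-- For `w = (π, λ)` with `Σ_j λ_j = r`, the standard lattice chain
satisfies `Λ_i ⊇ w(Λ_i) ⊇ tΛ_i` for every `i ∈ {0,…,d-1}` if and only if `w` is
`μ`-permissible for `μ = (1,…,1,0,…,0)` with `r` ones. -/
theorem stmt0 (π : Equiv.Perm (Fin d)) (lam : Fin d → ℤ) (r : ℕ)
    (hr : (∑ j, lam j) = (r : ℤ)) :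
    (∀ i : Fin d, wLam k d π lam (i : ℕ) ≤ Lam k d (i : ℕ) ∧
      tLam k d (i : ℕ) ≤ wLam k d π lam (i : ℕ)) ↔
    MuPermissible d π lam r := by
  unfold MuPermissible
  refine forall_congr' fun i => ?_
  have hsum : ∑ b, (wAff d π lam (vertex d (i : ℕ)) b - vertex d (i : ℕ) b) = (r : ℤ) := by
    unfold wAff
    have h1 : ∑ b, (vertex d (i : ℕ) (π.symm b) + lam (π.symm b))
        = ∑ j, (vertex d (i : ℕ) j + lam j) :=
      Equiv.sum_comp π.symm (fun j => vertex d (i : ℕ) j + lam j)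
    rw [Finset.sum_sub_distrib, h1, Finset.sum_add_distrib, hr]
    ring
  rw [wLam_eq, Lam_eq, tLam_eq, L_le_L_iff, L_le_L_iff, ← rearrange_iff d r _ hsum]
  simp only [wAff]
  constructor
  · rintro ⟨h1, h2⟩ b
    have hb1 := h1 b
    have hb2 := h2 b
    omega
  · intro h
    constructor <;> intro b <;> have hb := h b <;> omega


end
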